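/- If the low-bits condition holds, the signature verifies: let w = Ay (a vector of integers componentwise), e = -c·s₂ componentwise, and suppose for every coordinate j, |LowBits(w_j, 2γ₂) + e_j| < γ₂ where LowBits(w_j, 2γ₂) is the remainder r_j with -γ₂ < r_j ≤ γ₂. Then HighBits(w_j, 2γ₂) = HighBits(w_j + e_j, 2γ₂) for every coordinate j. -/

import Mathlib

theorem Int.eq_of_mul_add_eq_mul_add {n q q' s s' : ℤ} (h : q * n + s = q' * n + s')
    (hs : |s - s'| < n) : q = q' := by
  have hn : 0 < n := (abs_nonneg _).trans_lt hs
  have hdiff : (q - q') * n = -(s - s') := by linarith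
  have hq : |q - q'| * n = |s - s'| := by
    rw [← abs_neg (s - s'), ← hdiff, abs_mul, abs_of_pos hn]
  have : |q - q'| < 1 := lt_of_mul_lt_mul_right (by rwa [one_mul, hq]) hn.le
  exact sub_eq_zero.mp (Int.abs_lt_one_iff.mp this)

theorem highBits_eq_of_lowBits_small_general {m : ℕ} (w e q r q' r' : Fin m → ℤ)
    (γ₂ : ℤ)
    (hw : ∀ j, w j = q j * (2 * γ₂) + r j)
    (hw' : ∀ j, w j + e j = q' j * (2 * γ₂) + r' j)
    (hr'₁ : ∀ j, -γ₂ < r' j) (hr'₂ : ∀ j, r' j ≤ γ₂)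
    (hsmall : ∀ j, |r j + e j| < γ₂) :
    q = q' := by
  funext j
  -- `w j + e j` has the two decompositions with remainders `r j + e j ∈ (-γ₂, γ₂)` and `r' j`.
  refine Int.eq_of_mul_add_eq_mul_add (n := 2 * γ₂) (s := r j + e j) (s' := r' j)
    (by linarith [hw j, hw' j]) ?_
  obtain ⟨hlo, hhi⟩ := abs_lt.mp (hsmall j)
  exact abs_lt.mpr ⟨by linarith [hr'₂ j], by linarith [hr'₁ j]⟩

/-- Componentwise HighBits stability (Equation (1) of the paper): with
`w j = q j · 2γ₂ + r j` and `w j + e j = q' j · 2γ₂ + r' j` the canonical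
decompositions (`LowBits ∈ (-γ₂, γ₂]`), if `|r j + e j| < γ₂` for every
coordinate `j`, then the high bits agree: `q = q'`. -/
theorem highBits_eq_of_lowBits_small {m : ℕ} (w e q r q' r' : Fin m → ℤ)
    (γ₂ : ℤ) (hγ : 0 < γ₂)
    (hw : ∀ j, w j = q j * (2 * γ₂) + r j)
    (hr₁ : ∀ j, -γ₂ < r j) (hr₂ : ∀ j, r j ≤ γ₂)
    (hw' : ∀ j, w j + e j = q' j * (2 * γ₂) + r' j)
    (hr'₁ : ∀ j, -γ₂ < r' j) (hr'₂ : ∀ j, r' j ≤ γ₂)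
    (hsmall : ∀ j, |r j + e j| < γ₂) :
    q = q' :=
  highBits_eq_of_lowBits_small_general w e q r q' r' γ₂ hw hw' hr'₁ hr'₂ hsmall
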